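/- Let 𝔤 = 𝔰𝔩₂(ℂ) with standard basis h, e, f and γ₂ = ½ h⊗h + e⊗f + f⊗e. The rational solution ρ(z) = (1/z)·γ₂ + ½·(h⊗f − f⊗h) satisfies the classical Yang–Baxter equation with one spectral parameter: for all x, y ∈ ℂ with x ≠ 0, y ≠ 0 and x+y ≠ 0, one has [ρ(x), ρ(x+y)]^{12,13} + [ρ(x+y), ρ(y)]^{13,23} + [ρ(x), ρ(y)]^{12,23} = 0. -/

import Mathlib

/-!
Write `ρ(z) = z⁻¹ γ + r` with `γ` the Casimir element and `r = ½ h ∧ f`, and expand the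
Yang–Baxter expression bilinearly. The `γ`–`γ` terms are the three brackets
`[γ₁₂, γ₁₃] = [γ₁₃, γ₂₃] = -[γ₁₂, γ₂₃]` of the Casimir element, weighted by
`1/(x(x+y)) + 1/((x+y)y) - 1/(xy) = 0`. The mixed terms cancel in pairs because `γ` is
`ad`-invariant and `r` is skew, and the `r`–`r` terms cancel because `r` is a wedge of two
elements spanning a subalgebra.
-/

open scoped TensorProduct
open Matrix

noncomputable section

/-- The Lie algebra of `2 × 2` complex matrices (ambient algebra of `𝔰𝔩₂(ℂ)`). -/
abbrev M2 : Type := Matrix (Fin 2) (Fin 2) ℂ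

/-- `h = e₁₁ - e₂₂`. -/
def hM : M2 := Matrix.single 0 0 1 - Matrix.single 1 1 1

/-- `e = e₁₂`. -/
def eM : M2 := Matrix.single 0 1 1

/-- `f = e₂₁`. -/
def fM : M2 := Matrix.single 1 0 1

/-- The Casimir element `γ₂ = ½ h⊗h + e⊗f + f⊗e` of `𝔰𝔩₂(ℂ)`. -/
def γ₂ : M2 ⊗[ℂ] M2 := (1 / 2 : ℂ) • (hM ⊗ₜ[ℂ] hM) + eM ⊗ₜ[ℂ] fM + fM ⊗ₜ[ℂ] eM

/-- The rational solution `ρ(z) = γ₂/z + ½(h⊗f − f⊗h)` for `𝔰𝔩₂(ℂ)`. -/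
def ρRat (z : ℂ) : M2 ⊗[ℂ] M2 :=
  z⁻¹ • γ₂ + (1 / 2 : ℂ) • (hM ⊗ₜ[ℂ] fM - fM ⊗ₜ[ℂ] hM)

section

variable {K M N : Type*} [Field K] [AddCommGroup M] [Module K M] [AddCommGroup N] [Module K N]

variable (K) in
def casimir (h e f : M) : M ⊗[K] M := (1 / 2 : K) • (h ⊗ₜ h) + e ⊗ₜ f + f ⊗ₜ e

variable (K) in
def halfWedge (a b : M) : M ⊗[K] M := (1 / 2 : K) • (a ⊗ₜ b - b ⊗ₜ a)

theorem yangBaxter_inv_smul_add (B1213 B1223 B1323 : M →ₗ[K] M →ₗ[K] N) {γ r : M}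
    (hγ1213 : B1213 γ γ = B1323 γ γ) (hγ1223 : B1223 γ γ = -B1323 γ γ)
    (h1213_1223 : B1213 γ r + B1223 γ r = 0) (h1213_1323 : B1213 r γ + B1323 γ r = 0)
    (h1323_1223 : B1323 r γ + B1223 r γ = 0) (hr : B1213 r r + B1323 r r + B1223 r r = 0)
    {x y : K} (hx : x ≠ 0) (hy : y ≠ 0) (hxy : x + y ≠ 0) :
    B1213 (x⁻¹ • γ + r) ((x + y)⁻¹ • γ + r) + B1323 ((x + y)⁻¹ • γ + r) (y⁻¹ • γ + r)
      + B1223 (x⁻¹ • γ + r) (y⁻¹ • γ + r) = 0 := by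
  simp only [map_add, map_smul, LinearMap.add_apply, LinearMap.smul_apply]
  linear_combination (norm := skip) (x⁻¹ * (x + y)⁻¹) • hγ1213 + (x⁻¹ * y⁻¹) • hγ1223
    + x⁻¹ • h1213_1223 + (x + y)⁻¹ • h1213_1323 + y⁻¹ • h1323_1223 + hr
  match_scalars <;> field_simp <;> ring

end

section Sl2

variable {K L : Type*} [Field K] [LieRing L] [LieAlgebra K L]

namespace IsSl2Triple

variable {h e f : L}

variable (K) in
theorem lie_e_h_smul (t : IsSl2Triple h e f) : ⁅e, h⁆ = -((2 : K) • e) := by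
  rw [← lie_skew, t.lie_h_e_smul K]

variable (K) in
theorem lie_f_h_smul (t : IsSl2Triple h e f) : ⁅f, h⁆ = (2 : K) • f := by
  rw [← lie_skew, t.lie_lie_smul_f K, neg_neg]

theorem lie_f_e (t : IsSl2Triple h e f) : ⁅f, e⁆ = -h := by
  rw [← lie_skew, t.lie_e_f]

end IsSl2Triple

variable {B1213 B1223 B1323 : (L ⊗[K] L) →ₗ[K] (L ⊗[K] L) →ₗ[K] (L ⊗[K] (L ⊗[K] L))}
  (hB1213 : ∀ a b c d : L, B1213 (a ⊗ₜ b) (c ⊗ₜ d) = ⁅a, c⁆ ⊗ₜ (b ⊗ₜ d))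
  (hB1223 : ∀ a b c d : L, B1223 (a ⊗ₜ b) (c ⊗ₜ d) = a ⊗ₜ (⁅b, c⁆ ⊗ₜ d))
  (hB1323 : ∀ a b c d : L, B1323 (a ⊗ₜ b) (c ⊗ₜ d) = a ⊗ₜ (c ⊗ₜ ⁅b, d⁆))

include hB1213 hB1223 hB1323 in
theorem halfWedge_yangBaxter {a b : L} {c d : K} (hab : ⁅a, b⁆ = c • a + d • b) :
    B1213 (halfWedge K a b) (halfWedge K a b) + B1323 (halfWedge K a b) (halfWedge K a b)
      + B1223 (halfWedge K a b) (halfWedge K a b) = 0 := by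
  have hba : ⁅b, a⁆ = -(c • a + d • b) := by rw [← lie_skew, hab]
  simp only [halfWedge, map_sub, map_smul, LinearMap.sub_apply, LinearMap.smul_apply,
    hB1213, hB1223, hB1323, lie_self, hab, hba, TensorProduct.zero_tmul, TensorProduct.tmul_zero,
    TensorProduct.add_tmul, TensorProduct.tmul_add, TensorProduct.neg_tmul, TensorProduct.tmul_neg,
    ← TensorProduct.smul_tmul', TensorProduct.tmul_smul]
  module

variable {h e f : L} (t : IsSl2Triple h e f)

include hB1213 hB1323 t in
theorem casimir_bracket1213_self [NeZero (2 : K)] :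
    B1213 (casimir K h e f) (casimir K h e f) = B1323 (casimir K h e f) (casimir K h e f) := by
  simp only [casimir, map_add, map_smul, LinearMap.add_apply, LinearMap.smul_apply, hB1213, hB1323,
    lie_self, t.lie_e_f, t.lie_f_e, t.lie_h_e_smul K, t.lie_lie_smul_f K, t.lie_e_h_smul K,
    t.lie_f_h_smul K, TensorProduct.zero_tmul, TensorProduct.tmul_zero, TensorProduct.neg_tmul,
    TensorProduct.tmul_neg, ← TensorProduct.smul_tmul', TensorProduct.tmul_smul, smul_zero]
  match_scalars <;> field_simp

include hB1223 hB1323 t in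
theorem casimir_bracket1223_self [NeZero (2 : K)] :
    B1223 (casimir K h e f) (casimir K h e f) = -B1323 (casimir K h e f) (casimir K h e f) := by
  simp only [casimir, map_add, map_smul, LinearMap.add_apply, LinearMap.smul_apply, hB1223, hB1323,
    lie_self, t.lie_e_f, t.lie_f_e, t.lie_h_e_smul K, t.lie_lie_smul_f K, t.lie_e_h_smul K,
    t.lie_f_h_smul K, TensorProduct.zero_tmul, TensorProduct.tmul_zero, TensorProduct.neg_tmul,
    TensorProduct.tmul_neg, ← TensorProduct.smul_tmul', TensorProduct.tmul_smul, smul_zero]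
  match_scalars <;> field_simp

include hB1213 hB1223 t in
theorem casimir_halfWedge_bracket1213_add_bracket1223 :
    B1213 (casimir K h e f) (halfWedge K h f) + B1223 (casimir K h e f) (halfWedge K h f) = 0 := by
  simp only [casimir, halfWedge, map_add, map_sub, map_smul, LinearMap.add_apply,
    LinearMap.smul_apply, hB1213, hB1223, lie_self, t.lie_e_f, t.lie_lie_smul_f K,
    t.lie_e_h_smul K, t.lie_f_h_smul K, TensorProduct.zero_tmul, TensorProduct.tmul_zero,
    TensorProduct.neg_tmul, TensorProduct.tmul_neg, ← TensorProduct.smul_tmul',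
    TensorProduct.tmul_smul, smul_zero]
  match_scalars <;> field_simp <;> ring

include hB1213 hB1323 t in
theorem halfWedge_casimir_bracket1213_add_bracket1323 :
    B1213 (halfWedge K h f) (casimir K h e f) + B1323 (casimir K h e f) (halfWedge K h f) = 0 := by
  simp only [casimir, halfWedge, map_add, map_sub, map_smul, LinearMap.add_apply,
    LinearMap.sub_apply, LinearMap.smul_apply, hB1213, hB1323, lie_self, t.lie_e_f, t.lie_f_e,
    t.lie_h_e_smul K, t.lie_lie_smul_f K, t.lie_e_h_smul K, t.lie_f_h_smul K,
    TensorProduct.zero_tmul, TensorProduct.tmul_zero, TensorProduct.neg_tmul,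
    TensorProduct.tmul_neg, ← TensorProduct.smul_tmul', TensorProduct.tmul_smul, smul_zero]
  match_scalars <;> field_simp <;> ring

include hB1223 hB1323 t in
theorem halfWedge_casimir_bracket1323_add_bracket1223 :
    B1323 (halfWedge K h f) (casimir K h e f) + B1223 (halfWedge K h f) (casimir K h e f) = 0 := by
  simp only [casimir, halfWedge, map_add, map_sub, map_smul, LinearMap.sub_apply,
    LinearMap.smul_apply, hB1223, hB1323, lie_self, t.lie_f_e, t.lie_h_e_smul K,
    t.lie_lie_smul_f K, t.lie_f_h_smul K, TensorProduct.zero_tmul, TensorProduct.tmul_zero,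
    TensorProduct.neg_tmul, TensorProduct.tmul_neg, ← TensorProduct.smul_tmul',
    TensorProduct.tmul_smul]
  match_scalars <;> field_simp <;> ring

end Sl2

theorem ρRat_eq (z : ℂ) : ρRat z = z⁻¹ • casimir ℂ hM eM fM + halfWedge ℂ hM fM := rfl

section Matrices

-- The commutator Lie ring structure of an associative ring is not a global instance.
attribute [local instance] LieRing.ofAssociativeRing

theorem isSl2Triple_hM_eM_fM : IsSl2Triple hM eM fM where
  h_ne_zero h0 := by simpa [hM] using congrFun (congrFun h0 0) 0
  lie_e_f := by
    ext i j; fin_cases i <;> fin_cases j <;> norm_num [Ring.lie_def, hM, eM, fM, Matrix.mul_apply]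
  lie_h_e_nsmul := by
    ext i j; fin_cases i <;> fin_cases j <;> norm_num [Ring.lie_def, hM, eM, Matrix.mul_apply]
  lie_h_f_nsmul := by
    ext i j; fin_cases i <;> fin_cases j <;> norm_num [Ring.lie_def, hM, fM, Matrix.mul_apply]

end Matrices

/-- The rational solution `ρ(z) = γ₂/z + ½(h⊗f − f⊗h)` satisfies the
classical Yang–Baxter equation with one spectral parameter. -/
theorem statement19
    (B1213 B1223 B1323 :
      (M2 ⊗[ℂ] M2) →ₗ[ℂ] (M2 ⊗[ℂ] M2) →ₗ[ℂ] (M2 ⊗[ℂ] (M2 ⊗[ℂ] M2)))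
    (hB1213 : ∀ a b c d : M2,
      B1213 (a ⊗ₜ[ℂ] b) (c ⊗ₜ[ℂ] d) = ⁅a, c⁆ ⊗ₜ[ℂ] (b ⊗ₜ[ℂ] d))
    (hB1223 : ∀ a b c d : M2,
      B1223 (a ⊗ₜ[ℂ] b) (c ⊗ₜ[ℂ] d) = a ⊗ₜ[ℂ] (⁅b, c⁆ ⊗ₜ[ℂ] d))
    (hB1323 : ∀ a b c d : M2,
      B1323 (a ⊗ₜ[ℂ] b) (c ⊗ₜ[ℂ] d) = a ⊗ₜ[ℂ] (c ⊗ₜ[ℂ] ⁅b, d⁆))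
    :
    ∀ x y : ℂ, x ≠ 0 → y ≠ 0 → x + y ≠ 0 →
      B1213 (ρRat x) (ρRat (x + y)) + B1323 (ρRat (x + y)) (ρRat y)
        + B1223 (ρRat x) (ρRat y) = 0 := by
  intro x y hx hy hxy
  let : LieRing M2 := LieRing.ofAssociativeRing
  have t := isSl2Triple_hM_eM_fM
  have hf : ⁅hM, fM⁆ = (0 : ℂ) • hM + (-2 : ℂ) • fM := by
    rw [t.lie_lie_smul_f ℂ]; module
  simp only [ρRat_eq]
  exact yangBaxter_inv_smul_add B1213 B1223 B1323
    (casimir_bracket1213_self hB1213 hB1323 t) (casimir_bracket1223_self hB1223 hB1323 t)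
    (casimir_halfWedge_bracket1213_add_bracket1223 hB1213 hB1223 t)
    (halfWedge_casimir_bracket1213_add_bracket1323 hB1213 hB1323 t)
    (halfWedge_casimir_bracket1323_add_bracket1223 hB1223 hB1323 t)
    (halfWedge_yangBaxter hB1213 hB1223 hB1323 hf) hx hy hxy

end
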